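/- Let G be a connected locally finite graph whose isoperimetric profile satisfies Φ(k) ≥ c·k^{(d-1)/d} for all k ≥ 1, for some constant c > 0 and some real d ≥ 2, and let f : ℕ → ℕ satisfy f(n) = o(n^{d-2}). Then there exists an integer N (depending only on c, d and f) such that no initial fire of size at least N can be contained by deploying at most f(n) firefighters at time n: for every such strategy the set of burning vertices grows without bound, indeed the number of burning vertices at time n is at least ((n+F)/R)^d for suitable constants F, R > 0. -/

import Mathlib

open Filter Real

/-! Write `k n = |K n|` and `p n = |P n|`. Every vertex of `∂(K n)` either burns at time `n + 1`
or is protected by then, so the isoperimetric inequality gives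
`k (n + 1) ≥ k n + c · k n ^ ((d - 1) / d) - p (n + 1)`, while `f = o(n ^ (d - 2))` gives
`p n ≤ A + ε · n ^ (d - 1)` for any `ε > 0`. With `a = (n + F) / R`, choosing `R` large makes
`(a + 1 / R) ^ d - a ^ d ≤ (c / 4) · a ^ (d - 1)`, and choosing `ε` small and `F` large makes
`p (n + 1) ≤ (3c / 4) · a ^ (d - 1)`; hence `k n ≥ a ^ d` propagates by induction from
`k 0 ≥ (F / R) ^ d`. -/

/-- The outer vertex boundary of a set of vertices: vertices outside `K`
adjacent to some vertex of `K`. -/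
def SimpleGraph.outerBoundary {V : Type*} (G : SimpleGraph V) (K : Set V) : Set V :=
  {v | v ∉ K ∧ ∃ u ∈ K, G.Adj u v}

/-- The (vertex) isoperimetric profile of a graph:
`Φ(k) = inf {|∂K| : K ⊆ V, |K| = k}`. -/
noncomputable def SimpleGraph.isoProfile {V : Type*} (G : SimpleGraph V) (k : ℕ) : ℕ :=
  sInf {m | ∃ K : Set V, K.Finite ∧ K.ncard = k ∧ (G.outerBoundary K).ncard = m}

/-- A valid play of the firefighter game on `G` against at most `f n` firefighters
deployed at step `n`. `K n` is the set of burning vertices at time `n`, and `P n`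
is the cumulative set of protected vertices at time `n`: at each step at most
`f (n+1)` new vertices, none of them on fire, become protected, and then the fire
spreads to all unprotected neighbours of burning vertices. -/
structure FireStrategy {V : Type*} (G : SimpleGraph V) (f : ℕ → ℕ) (K P : ℕ → Set V) : Prop where
  burning_finite : ∀ n, (K n).Finite
  protected_finite : ∀ n, (P n).Finite
  protected_zero : P 0 = ∅
  protected_mono : ∀ n, P n ⊆ P (n + 1)
  protected_card : ∀ n, (P (n + 1) \ P n).ncard ≤ f (n + 1)
  protected_not_burning : ∀ n, Disjoint (P (n + 1)) (K n)
  spread : ∀ n, K (n + 1) = K n ∪ (G.outerBoundary (K n) \ P (n + 1))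

/-- `G` has the `{f(n)}`-containment property if every finite initial fire admits a
strategy protecting at most `f n` vertices at step `n` under which the set of burning
vertices is eventually constant. -/
def HasContainment {V : Type*} (G : SimpleGraph V) (f : ℕ → ℕ) : Prop :=
  ∀ K₀ : Set V, K₀.Finite →
    ∃ K P : ℕ → Set V, K 0 = K₀ ∧ FireStrategy G f K P ∧ ∃ N, ∀ n, N ≤ n → K n = K N

/-- The Cayley graph of a group w.r.t. a finite (symmetric) set `S`. -/
def cayleyGraph {Γ : Type*} [Group Γ] (S : Finset Γ) : SimpleGraph Γ :=
  SimpleGraph.fromRel (fun g h => g⁻¹ * h ∈ S)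

/-- The growth function of a group w.r.t. a finite generating set: the number of
elements expressible as a product of at most `n` generators, i.e. `|B_n(id)|` in the
word metric. -/
noncomputable def growth {Γ : Type*} [Group Γ] (S : Finset Γ) (n : ℕ) : ℕ :=
  Set.ncard {g : Γ | ∃ l : List Γ, l.length ≤ n ∧ (∀ x ∈ l, x ∈ (S : Set Γ)) ∧ l.prod = g}

theorem Real.rpow_add_le_add_mul_rpow {a h d : ℝ} (hd : 1 ≤ d) (ha : 0 < a) (hh : 0 ≤ h)
    (hha : h ≤ a) : (a + h) ^ d ≤ a ^ d + d * 2 ^ (d - 1) * h * a ^ (d - 1) := by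
  have hb : 0 < a + h := by linarith
  -- Bernoulli's inequality at `s = -h / (a + h)`: a tangent line of `x ↦ x ^ d` lies below it.
  have hbernoulli : (a + h) ^ d - d * (a + h) ^ (d - 1) * h ≤ a ^ d := by
    have key := one_add_mul_self_le_rpow_one_add (s := -h / (a + h))
      (by rw [le_div_iff₀ hb]; linarith) hd
    rw [show 1 + -h / (a + h) = a / (a + h) by field_simp; ring, div_rpow ha.le hb.le,
      le_div_iff₀ (rpow_pos_of_pos hb d)] at key
    rw [rpow_sub_one hb.ne']
    refine le_of_eq_of_le ?_ key
    field_simp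
    ring
  have hpow : (a + h) ^ (d - 1) ≤ 2 ^ (d - 1) * a ^ (d - 1) := by
    rw [← mul_rpow zero_le_two ha.le]
    exact rpow_le_rpow hb.le (by linarith) (by linarith)
  nlinarith [mul_le_mul_of_nonneg_left hpow (mul_nonneg (by linarith : (0 : ℝ) ≤ d) hh)]

theorem sum_range_succ_le_sum_add_rpow {g : ℕ → ℝ} {ε e : ℝ} {n₀ : ℕ} (hg : ∀ n, 0 ≤ g n)
    (hε : 0 ≤ ε) (he : 0 ≤ e) (hbound : ∀ n ≥ n₀, g n ≤ ε * (n : ℝ) ^ e) (n : ℕ) :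
    ∑ i ∈ Finset.range n, g (i + 1) ≤
      ∑ i ∈ Finset.range n₀, g (i + 1) + ε * (n : ℝ) ^ (e + 1) := by
  induction n with
  | zero =>
    simpa [zero_rpow (by linarith : e + 1 ≠ 0)] using Finset.sum_nonneg fun i _ => hg (i + 1)
  | succ n ih =>
    rcases lt_or_ge n n₀ with hn | hn
    · have hsub : ∑ i ∈ Finset.range (n + 1), g (i + 1) ≤ ∑ i ∈ Finset.range n₀, g (i + 1) :=
        Finset.sum_le_sum_of_subset_of_nonneg (Finset.range_subset_range.2 hn)
          fun i _ _ => hg (i + 1)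
      have : 0 ≤ ε * ((n + 1 : ℕ) : ℝ) ^ (e + 1) := by positivity
      linarith
    · have hpow : (n : ℝ) ^ (e + 1) + ((n : ℝ) + 1) ^ e ≤ ((n : ℝ) + 1) ^ (e + 1) := by
        rw [rpow_add_one' (by positivity) (by linarith), rpow_add_one' (by positivity) (by linarith)]
        have : (n : ℝ) ^ e ≤ ((n : ℝ) + 1) ^ e := rpow_le_rpow (by positivity) (by linarith) he
        nlinarith [Nat.cast_nonneg (α := ℝ) n]
      have hgn : g (n + 1) ≤ ε * ((n : ℝ) + 1) ^ e := by
        exact_mod_cast hbound (n + 1) (by omega)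
      rw [Finset.sum_range_succ]
      push_cast
      nlinarith [mul_le_mul_of_nonneg_left hpow hε]

theorem rpow_le_of_isoperimetric_recurrence {c d R F A ε : ℝ} (hc : 0 < c) (hd : 2 ≤ d)
    (hR : 1 ≤ R) (hRc : 4 * d * 2 ^ (d - 1) ≤ c * R) (hFR : R ≤ F) (hA : 2 * A * R ≤ c * F)
    (hε : 0 ≤ ε) (hεR : 4 * ε * R ^ (d - 1) ≤ c) {k p : ℕ → ℝ} (hk0 : (F / R) ^ d ≤ k 0)
    (hp : ∀ n, p n ≤ A + ε * (n : ℝ) ^ (d - 1))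
    (hk : ∀ n, 1 ≤ k n → k n + c * k n ^ ((d - 1) / d) ≤ k (n + 1) + p (n + 1)) (n : ℕ) :
    (((n : ℝ) + F) / R) ^ d ≤ k n := by
  induction n with
  | zero => simpa using hk0
  | succ n ih =>
    set a := ((n : ℝ) + F) / R with ha_def
    have hR0 : 0 < R := by linarith
    have hn : (0 : ℝ) ≤ n := Nat.cast_nonneg n
    have ha : 1 ≤ a := by rw [le_div_iff₀ hR0]; linarith
    have hda : 0 ≤ a ^ (d - 1) := by positivity
    have hgrowth : (a + 1 / R) ^ d ≤ a ^ d + c / 4 * a ^ (d - 1) := by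
      have hstep : 1 / R ≤ a := (div_le_one_of_le₀ hR (by linarith)).trans ha
      refine (rpow_add_le_add_mul_rpow (by linarith) (by linarith) (by positivity) hstep).trans ?_
      have : d * 2 ^ (d - 1) * (1 / R) ≤ c / 4 := by
        rw [mul_one_div, div_le_iff₀ hR0]; linarith
      nlinarith
    have hprotected : p (n + 1) ≤ 3 * c / 4 * a ^ (d - 1) := by
      have hA' : A ≤ c / 2 * a ^ (d - 1) := by
        have : F / R ≤ a := by rw [ha_def]; gcongr; linarith
        have : a ≤ a ^ (d - 1) := by
          simpa using rpow_le_rpow_of_exponent_le ha (by linarith : (1 : ℝ) ≤ d - 1)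
        have : A ≤ c / 2 * (F / R) := by
          rw [mul_div_assoc', le_div_iff₀ hR0]; linarith
        nlinarith
      have hε' : ε * ((n : ℝ) + 1) ^ (d - 1) ≤ c / 4 * a ^ (d - 1) := by
        have : ((n : ℝ) + 1) ^ (d - 1) ≤ R ^ (d - 1) * a ^ (d - 1) := by
          rw [← mul_rpow hR0.le (by linarith), ha_def, mul_div_cancel₀ _ hR0.ne']
          exact rpow_le_rpow (by linarith) (by linarith) (by linarith)
        nlinarith [mul_le_mul_of_nonneg_left this hε]
      have := hp (n + 1)
      push_cast at this
      linarith
    have hburning : a ^ d + c * a ^ (d - 1) ≤ k n + c * k n ^ ((d - 1) / d) := by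
      have : a ^ (d - 1) ≤ k n ^ ((d - 1) / d) := by
        rw [show a ^ (d - 1) = (a ^ d) ^ ((d - 1) / d) by
          rw [← rpow_mul (by linarith)]; congr 1; field_simp]
        exact rpow_le_rpow (by positivity) ih (div_nonneg (by linarith) (by linarith))
      nlinarith
    have hk1 : 1 ≤ k n := le_trans (one_le_rpow ha (by linarith)) ih
    rw [show ((n + 1 : ℕ) + F) / R = a + 1 / R by push_cast; ring]
    linarith [hk n hk1]

theorem SimpleGraph.isoProfile_le_ncard_outerBoundary {V : Type*} (G : SimpleGraph V)
    {K : Set V} (hK : K.Finite) : G.isoProfile K.ncard ≤ (G.outerBoundary K).ncard :=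
  Nat.sInf_le ⟨K, hK, rfl, rfl⟩

namespace FireStrategy

variable {V : Type*} {G : SimpleGraph V} {f : ℕ → ℕ} {K P : ℕ → Set V}

theorem ncard_protected_le (hS : FireStrategy G f K P) (n : ℕ) :
    (P n).ncard ≤ ∑ i ∈ Finset.range n, f (i + 1) := by
  induction n with
  | zero => simp [hS.protected_zero]
  | succ n ih =>
    rw [Finset.sum_range_succ, ← Set.union_sdiff_cancel (hS.protected_mono n)]
    exact (Set.ncard_union_le _ _).trans (add_le_add ih (hS.protected_card n))

theorem ncard_add_ncard_outerBoundary_le (hS : FireStrategy G f K P) (n : ℕ) :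
    (K n).ncard + (G.outerBoundary (K n)).ncard ≤ (K (n + 1)).ncard + (P (n + 1)).ncard := by
  set B := G.outerBoundary (K n)
  have hBP : (B \ P (n + 1)).Finite :=
    (hS.burning_finite (n + 1)).subset (hS.spread n ▸ Set.subset_union_right)
  have hdisj : Disjoint (K n) (B \ P (n + 1)) :=
    Set.disjoint_left.2 fun v hv hvB => hvB.1.1 hv
  have hburn : (K (n + 1)).ncard = (K n).ncard + (B \ P (n + 1)).ncard := by
    rw [hS.spread n, Set.ncard_union_eq hdisj (hS.burning_finite n) hBP]
  have hB : B.ncard ≤ (B \ P (n + 1)).ncard + (P (n + 1)).ncard :=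
    (Set.ncard_le_ncard (Set.subset_sdiff_union B (P (n + 1)))
      (hBP.union (hS.protected_finite (n + 1)))).trans (Set.ncard_union_le _ _)
  omega

theorem ncard_add_mul_rpow_le_of_isoProfile (hS : FireStrategy G f K P) {c e : ℝ}
    (hiso : ∀ k : ℕ, 1 ≤ k → c * (k : ℝ) ^ e ≤ (G.isoProfile k : ℝ)) {n : ℕ}
    (hn : 1 ≤ (K n).ncard) :
    ((K n).ncard : ℝ) + c * ((K n).ncard : ℝ) ^ e ≤ (K (n + 1)).ncard + (P (n + 1)).ncard := by
  have hprofile : (G.isoProfile (K n).ncard : ℝ) ≤ (G.outerBoundary (K n)).ncard := by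
    exact_mod_cast G.isoProfile_le_ncard_outerBoundary (hS.burning_finite n)
  have hstep : ((K n).ncard : ℝ) + (G.outerBoundary (K n)).ncard ≤
      (K (n + 1)).ncard + (P (n + 1)).ncard := by
    exact_mod_cast hS.ncard_add_ncard_outerBoundary_le n
  linarith [hiso _ hn]

theorem ncard_protected_le_sum_add_rpow (hS : FireStrategy G f K P) {ε e : ℝ} {n₀ : ℕ}
    (hε : 0 ≤ ε) (he : 0 ≤ e) (hf : ∀ n ≥ n₀, (f n : ℝ) ≤ ε * (n : ℝ) ^ e) (n : ℕ) :
    ((P n).ncard : ℝ) ≤ ∑ i ∈ Finset.range n₀, (f (i + 1) : ℝ) + ε * (n : ℝ) ^ (e + 1) :=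
  calc ((P n).ncard : ℝ) ≤ ∑ i ∈ Finset.range n, (f (i + 1) : ℝ) := by
        exact_mod_cast hS.ncard_protected_le n
    _ ≤ _ := sum_range_succ_le_sum_add_rpow (fun _ => Nat.cast_nonneg _) hε he hf n

end FireStrategy

theorem not_exists_forall_ge_eq_of_tendsto {α β : Type*} [Preorder β] [NoTopOrder β]
    {u : ℕ → α} {φ : α → β} (h : Tendsto (fun n => φ (u n)) atTop atTop) :
    ¬ ∃ M : ℕ, ∀ n : ℕ, M ≤ n → u n = u M := fun ⟨M, hM⟩ =>
  not_tendsto_const_atTop (φ (u M)) atTop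
    (h.congr' (eventually_atTop.2 ⟨M, fun n hn => by rw [hM n hn]⟩))

theorem firefighter_isoperimetric_polynomial_quantitative_general {V : Type*} (G : SimpleGraph V)
    (c : ℝ) (hc : 0 < c) (d : ℝ) (hd : 2 ≤ d)
    (hiso : ∀ k : ℕ, 1 ≤ k → c * (k : ℝ) ^ ((d - 1) / d) ≤ (G.isoProfile k : ℝ))
    (f : ℕ → ℕ)
    (hf : (fun n => (f n : ℝ)) =o[atTop] fun n => (n : ℝ) ^ (d - 2)) :
    ∃ (N : ℕ) (F R : ℝ), 0 < F ∧ 0 < R ∧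
      ∀ K P : ℕ → Set V, FireStrategy G f K P → N ≤ (K 0).ncard →
        (∀ n : ℕ, (((n : ℝ) + F) / R) ^ d ≤ ((K n).ncard : ℝ)) ∧
          Tendsto (fun n => (K n).ncard) atTop atTop ∧
            ¬ ∃ M : ℕ, ∀ n : ℕ, M ≤ n → K n = K M := by
  obtain ⟨R, hR, hRc⟩ : ∃ R : ℝ, 1 ≤ R ∧ 4 * d * 2 ^ (d - 1) ≤ c * R :=
    ⟨1 + 4 * d * 2 ^ (d - 1) / c, le_add_of_nonneg_right (by positivity),
      by rw [mul_add, mul_div_cancel₀ _ hc.ne']; linarith⟩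
  obtain ⟨ε, hε, hεR⟩ : ∃ ε : ℝ, 0 < ε ∧ 4 * ε * R ^ (d - 1) ≤ c :=
    ⟨c / (4 * R ^ (d - 1)), by positivity, le_of_eq (by field_simp)⟩
  obtain ⟨n₀, hn₀⟩ : ∃ n₀ : ℕ, ∀ n ≥ n₀, (f n : ℝ) ≤ ε * (n : ℝ) ^ (d - 2) := by
    refine eventually_atTop.1 ((hf.bound hε).mono fun n hn => ?_)
    rwa [Real.norm_natCast, norm_of_nonneg (by positivity)] at hn
  set A : ℝ := ∑ i ∈ Finset.range n₀, (f (i + 1) : ℝ)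
  have hA : 0 ≤ A := Finset.sum_nonneg fun _ _ => Nat.cast_nonneg _
  obtain ⟨F, hFR, hAF⟩ : ∃ F : ℝ, R ≤ F ∧ 2 * A * R ≤ c * F :=
    ⟨R + 2 * A * R / c, le_add_of_nonneg_right (by positivity),
      by rw [mul_add, mul_div_cancel₀ _ hc.ne']; nlinarith⟩
  refine ⟨⌈(F / R) ^ d⌉₊, F, R, by linarith, by linarith, fun K P hS hN => ?_⟩
  have hlower (n : ℕ) : (((n : ℝ) + F) / R) ^ d ≤ ((K n).ncard : ℝ) := by
    refine rpow_le_of_isoperimetric_recurrence (k := fun n => ((K n).ncard : ℝ))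
      (p := fun n => ((P n).ncard : ℝ)) hc hd hR hRc hFR hAF hε.le hεR
      ((Nat.le_ceil _).trans (by exact_mod_cast hN)) (fun n => ?_)
      (fun n hn => hS.ncard_add_mul_rpow_le_of_isoProfile hiso (by exact_mod_cast hn)) n
    simpa [show d - 2 + 1 = d - 1 by ring] using
      hS.ncard_protected_le_sum_add_rpow hε.le (by linarith) hn₀ n
  have htendsto : Tendsto (fun n => (K n).ncard) atTop atTop := by
    refine tendsto_natCast_atTop_iff.1 (tendsto_atTop_mono hlower ?_)
    exact (tendsto_rpow_atTop (by linarith)).comp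
      ((tendsto_natCast_atTop_atTop.atTop_add tendsto_const_nhds).atTop_div_const (by linarith))
  exact ⟨hlower, htendsto, not_exists_forall_ge_eq_of_tendsto htendsto⟩

/-- Quantitative version: under a `d`-dimensional isoperimetric inequality and
`f = o(n^{d-2})`, there are `N, F, R` (depending only on `c`, `d` and `f`) such that no
initial fire of size at least `N` can be contained deploying at most `f n` firefighters
at time `n`: for every such strategy the number of burning vertices at time `n` is at
least `((n+F)/R)^d`, hence grows without bound. -/
theorem firefighter_isoperimetric_polynomial_quantitative {V : Type*} (G : SimpleGraph V)
    (hconn : G.Connected) (hlf : G.LocallyFinite)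
    (c : ℝ) (hc : 0 < c) (d : ℝ) (hd : 2 ≤ d)
    (hiso : ∀ k : ℕ, 1 ≤ k → c * (k : ℝ) ^ ((d - 1) / d) ≤ (G.isoProfile k : ℝ))
    (f : ℕ → ℕ)
    (hf : (fun n => (f n : ℝ)) =o[atTop] fun n => (n : ℝ) ^ (d - 2)) :
    ∃ (N : ℕ) (F R : ℝ), 0 < F ∧ 0 < R ∧
      ∀ K P : ℕ → Set V, FireStrategy G f K P → N ≤ (K 0).ncard →
        (∀ n : ℕ, (((n : ℝ) + F) / R) ^ d ≤ ((K n).ncard : ℝ)) ∧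
          Tendsto (fun n => (K n).ncard) atTop atTop ∧
            ¬ ∃ M : ℕ, ∀ n : ℕ, M ≤ n → K n = K M :=
  firefighter_isoperimetric_polynomial_quantitative_general G c hc d hd hiso f hf
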